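/- arXiv:1303.4769 — 2 statements merged into one kernel-verified Lean document; each statement's English description precedes it below -/
import Mathlib

section
/- Let A be a Banach algebra, B a Banach A-bimodule, and Φ: A → B a bounded multiplier (i.e., Φ(ab) = a·Φ(b) = Φ(a)·b for all a, b ∈ A) with dense range. Let φ, ψ: A → A be continuous algebra homomorphisms and let d: A → (B_{(φ,ψ)})* be a non-zero continuous (φ,ψ)-derivation. Then D := Φ* ∘ d : A → (A_{(φ,ψ)})* is a non-zero continuous (φ,ψ)-derivation, where Φ*: B* → A* is the adjoint of Φ. -/
/-!
STATEMENT 0.  Let `A` be a Banach algebra and `B` a Banach `A`-bimodule whose left and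
right module actions are encoded by continuous bilinear maps `l r : A →L[ℂ] B →L[ℂ] B`
(so `a • x = l a x` and `x • a = r a x`).  Let `Φ : A → B` be a bounded multiplier
(`Φ(ab) = a • Φ(b) = Φ(a) • b`) with dense range, let `φ ψ : A → A` be continuous algebra
homomorphisms and `d : A → (B_{(φ,ψ)})* = B*` a non-zero continuous `(φ,ψ)`-derivation,
i.e. `⟨d(ab), x⟩ = ⟨d a, φ(b) • x⟩ + ⟨d b, x • ψ(a)⟩`.  Then `D := Φ* ∘ d` is a non-zero
continuous `(φ,ψ)`-derivation `A → (A_{(φ,ψ)})* = A*`, i.e.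
`⟨D(ab), x⟩ = ⟨D a, φ(b) x⟩ + ⟨D b, x ψ(a)⟩` and `D ≠ 0`.
-/
theorem stmt0
    {A : Type*} [NormedRing A] [NormedAlgebra ℂ A] [CompleteSpace A]
    {B : Type*} [NormedAddCommGroup B] [NormedSpace ℂ B] [CompleteSpace B]
    -- the Banach `A`-bimodule structure of `B`
    (l r : A →L[ℂ] B →L[ℂ] B)
    (hl : ∀ (a b : A) (x : B), l (a * b) x = l a (l b x))
    (hr : ∀ (a b : A) (x : B), r (a * b) x = r b (r a x))
    (hlr : ∀ (a b : A) (x : B), l a (r b x) = r b (l a x))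
    -- `Φ` is a bounded multiplier with dense range
    (Φ : A →L[ℂ] B)
    (hΦl : ∀ a b : A, Φ (a * b) = l a (Φ b))
    (hΦr : ∀ a b : A, Φ (a * b) = r b (Φ a))
    (hdense : DenseRange Φ)
    -- `φ, ψ` are continuous algebra homomorphisms on `A`
    (φ ψ : A →L[ℂ] A)
    (hφ : ∀ a b : A, φ (a * b) = φ a * φ b)
    (hψ : ∀ a b : A, ψ (a * b) = ψ a * ψ b)
    -- `d` is a non-zero continuous `(φ,ψ)`-derivation `A → (B_{(φ,ψ)})*`
    (d : A →L[ℂ] B →L[ℂ] ℂ)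
    (hd : ∀ (a b : A) (x : B), d (a * b) x = d a (l (φ b) x) + d b (r (ψ a) x))
    (hd0 : d ≠ 0) :
    ∃ D : A →L[ℂ] A →L[ℂ] ℂ,
      (∀ a x : A, D a x = d a (Φ x)) ∧
      (∀ a b x : A, D (a * b) x = D a (φ b * x) + D b (x * ψ a)) ∧
      D ≠ 0 := by
  refine ⟨((ContinuousLinearMap.compL ℂ A B ℂ).flip Φ).comp d, fun a x => rfl, ?_, ?_⟩
  · intro a b x
    show d (a * b) (Φ x) = d a (Φ (φ b * x)) + d b (Φ (x * ψ a))
    rw [hd a b (Φ x), hΦl, hΦr]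
  · intro h0
    apply hd0
    ext a x
    have hda : ∀ y : A, d a (Φ y) = 0 := fun y => by
      have := congrFun (congrArg (fun f => (DFunLike.coe f)) (congrFun (congrArg (fun f => (DFunLike.coe f)) h0) a)) y
      simpa using this
    have : (d a : B → ℂ) = (0 : B →L[ℂ] ℂ) := by
      refine Continuous.ext_on hdense (d a).continuous (by continuity) ?_
      rintro _ ⟨y, rfl⟩
      simpa using hda y
    simpa using congrFun this x
end

section
/- Let G be a locally compact group and let φ: M(G) → M(G) be a continuous surjective algebra homomorphism. If M(G) is (φ,φ)-weakly amenable, then there is no non-zero continuous point derivation at any character of M(G) of the form ψ ∘ φ with ψ a character of M(G); consequently G is discrete and M(G) is weakly amenable. -/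
/-- Ordinary weak amenability of a Banach algebra `M`: every continuous derivation
`d : M → M*` (with the canonical dual bimodule actions, i.e.
`⟨d(ab), x⟩ = ⟨d a, bx⟩ + ⟨d b, xa⟩`) is inner (`⟨d a, x⟩ = ⟨ξ, ax⟩ - ⟨ξ, xa⟩`). -/
def WeaklyAmenable (M : Type*) [NormedRing M] [NormedAlgebra ℂ M] : Prop :=
  ∀ d : M →L[ℂ] M →L[ℂ] ℂ,
    (∀ a b x : M, d (a * b) x = d a (b * x) + d b (x * a)) →
    ∃ ξ : M →L[ℂ] ℂ, ∀ a x : M, d a x = ξ (a * x) - ξ (x * a)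

/-- No non-zero continuous point derivation exists at any character of `M`. -/
def NoPointDerivations (M : Type*) [NormedRing M] [NormedAlgebra ℂ M] : Prop :=
  ∀ χ : M →L[ℂ] ℂ, χ ≠ 0 → (∀ a b : M, χ (a * b) = χ a * χ b) →
    ∀ D : M →L[ℂ] ℂ, (∀ a b : M, D (a * b) = D a * χ b + χ a * D b) → D = 0

/-!
A point derivation `D` at a character `χ` yields the `(φ,φ)`-derivation `a ↦ D (φ a) • χ`.
If it is `(φ,φ)`-inner, `a ↦ ξ (φ a * x) - ξ (x * φ a)`, then evaluating at `x = 1` gives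
`D (φ a) = D (φ a) * χ 1 = 0`, so `D = 0` because `φ` is onto. Thus `M` has no point
derivations at all, and the Dales–Ghahramani–Helemskii theorem does the rest.
-/

section TwistedDerivation

variable {𝕜 M : Type*} [NormedField 𝕜] [NormedRing M] [NormedAlgebra 𝕜 M]

/-- `d : M → M*` is a `(φ,φ)`-derivation into the dual of `M_(φ,φ)`. -/
def IsTwistedDerivation (φ : M →L[𝕜] M) (d : M →L[𝕜] M →L[𝕜] 𝕜) : Prop :=
  ∀ a b x : M, d (a * b) x = d a (φ b * x) + d b (x * φ a)

def IsTwistedInner (φ : M →L[𝕜] M) (d : M →L[𝕜] M →L[𝕜] 𝕜) : Prop :=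
  ∃ ξ : M →L[𝕜] 𝕜, ∀ a x : M, d a x = ξ (φ a * x) - ξ (x * φ a)

def IsPointDerivation (χ D : M →L[𝕜] 𝕜) : Prop :=
  ∀ a b : M, D (a * b) = D a * χ b + χ a * D b

theorem IsTwistedInner.apply_one {φ : M →L[𝕜] M} {d : M →L[𝕜] M →L[𝕜] 𝕜}
    (hd : IsTwistedInner φ d) (a : M) : d a 1 = 0 := by
  obtain ⟨ξ, hξ⟩ := hd
  rw [hξ, mul_one, one_mul, sub_self]

theorem map_one_eq_one_of_map_mul {χ : M →L[𝕜] 𝕜} (hχ : χ ≠ 0)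
    (hχmul : ∀ a b : M, χ (a * b) = χ a * χ b) : χ 1 = 1 := by
  obtain ⟨m, hm⟩ := DFunLike.ne_iff.mp hχ
  have : χ m * χ 1 = χ m := by rw [← hχmul, mul_one]
  exact (mul_eq_left₀ hm).mp this

theorem IsPointDerivation.isTwistedDerivation_smulRight {φ : M →L[𝕜] M} {χ D : M →L[𝕜] 𝕜}
    (hD : IsPointDerivation χ D) (hχmul : ∀ a b : M, χ (a * b) = χ a * χ b)
    (hφ : ∀ a b : M, φ (a * b) = φ a * φ b) :
    IsTwistedDerivation φ ((D.comp φ).smulRight χ) := by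
  intro a b x
  simp only [ContinuousLinearMap.smulRight_apply, ContinuousLinearMap.comp_apply,
    smul_apply, smul_eq_mul, hφ, hD (φ a), hχmul]
  ring

theorem IsPointDerivation.eq_zero_of_isTwistedInner {φ : M →L[𝕜] M} {χ D : M →L[𝕜] 𝕜}
    (hχ : χ ≠ 0) (hχmul : ∀ a b : M, χ (a * b) = χ a * χ b) (hφonto : Function.Surjective φ)
    (hinner : IsTwistedInner φ ((D.comp φ).smulRight χ)) : D = 0 := by
  ext y
  obtain ⟨a, rfl⟩ := hφonto y
  simpa [map_one_eq_one_of_map_mul hχ hχmul] using hinner.apply_one a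

end TwistedDerivation

theorem noPointDerivations_of_forall_isTwistedInner {M : Type*} [NormedRing M]
    [NormedAlgebra ℂ M] {φ : M →L[ℂ] M} (hφ : ∀ a b : M, φ (a * b) = φ a * φ b)
    (hφonto : Function.Surjective φ)
    (hWA : ∀ d : M →L[ℂ] M →L[ℂ] ℂ, IsTwistedDerivation φ d → IsTwistedInner φ d) :
    NoPointDerivations M := fun _ hχ hχmul _ hD =>
  IsPointDerivation.eq_zero_of_isTwistedInner hχ hχmul hφonto
    (hWA _ (IsPointDerivation.isTwistedDerivation_smulRight hD hχmul hφ))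

theorem stmt4_general
    {G : Type*} [TopologicalSpace G]
    {M : Type*} [NormedRing M] [NormedAlgebra ℂ M]
    -- the Dales–Ghahramani–Helemskii theorem for `M(G)`:
    -- `M(G)` is weakly amenable iff `G` is discrete iff there is no non-zero
    -- continuous point derivation at a character of `M(G)`
    (hDGH₁ : WeaklyAmenable M ↔ DiscreteTopology G)
    (hDGH₂ : WeaklyAmenable M ↔ NoPointDerivations M)
    -- `φ`: a continuous surjective algebra homomorphism on `M(G)`
    (φ : M →L[ℂ] M)
    (hφ : ∀ a b : M, φ (a * b) = φ a * φ b)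
    (hφonto : Function.Surjective φ)
    -- `M(G)` is `(φ,φ)`-weakly amenable
    (hWA : ∀ d : M →L[ℂ] M →L[ℂ] ℂ,
      (∀ a b x : M, d (a * b) x = d a (φ b * x) + d b (x * φ a)) →
      ∃ ξ : M →L[ℂ] ℂ, ∀ a x : M, d a x = ξ (φ a * x) - ξ (x * φ a)) :
    -- then: no non-zero continuous point derivation at characters of the form `ψ ∘ φ`,
    -- `G` is discrete, and `M(G)` is weakly amenable
    (∀ ψ : M →L[ℂ] ℂ, ψ ≠ 0 → (∀ a b : M, ψ (a * b) = ψ a * ψ b) →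
      ∀ D : M →L[ℂ] ℂ,
        (∀ a b : M, D (a * b) = D a * ψ (φ b) + ψ (φ a) * D b) → D = 0) ∧
    DiscreteTopology G ∧ WeaklyAmenable M := by
  have hNPD : NoPointDerivations M := noPointDerivations_of_forall_isTwistedInner hφ hφonto hWA
  have hWAM : WeaklyAmenable M := hDGH₂.mpr hNPD
  refine ⟨fun ψ hψ hψmul D hD => hNPD (ψ.comp φ) ?_ (fun a b => by simp [hφ, hψmul]) D hD,
    hDGH₁.mp hWAM, hWAM⟩
  intro hψφ
  exact hψ (DFunLike.coe_injective (hφonto.injective_comp_right (congrArg DFunLike.coe hψφ)))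

theorem stmt4
    {G : Type*} [Group G] [TopologicalSpace G] [IsTopologicalGroup G]
    [LocallyCompactSpace G] [T2Space G]
    {M : Type*} [NormedRing M] [NormedAlgebra ℂ M] [CompleteSpace M]
    -- the point masses `δ_t ∈ M(G)`
    (dirac : G → M)
    (hdiracinj : Function.Injective dirac)
    (hdiracmul : ∀ s t : G, dirac s * dirac t = dirac (s * t))
    (hdiracone : dirac 1 = 1)
    (hdiracnorm : ∀ t : G, ‖dirac t‖ = 1)
    -- the Dales–Ghahramani–Helemskii theorem for `M(G)`:
    -- `M(G)` is weakly amenable iff `G` is discrete iff there is no non-zero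
    -- continuous point derivation at a character of `M(G)`
    (hDGH₁ : WeaklyAmenable M ↔ DiscreteTopology G)
    (hDGH₂ : WeaklyAmenable M ↔ NoPointDerivations M)
    -- `φ`: a continuous surjective algebra homomorphism on `M(G)`
    (φ : M →L[ℂ] M)
    (hφ : ∀ a b : M, φ (a * b) = φ a * φ b)
    (hφonto : Function.Surjective φ)
    -- `M(G)` is `(φ,φ)`-weakly amenable
    (hWA : ∀ d : M →L[ℂ] M →L[ℂ] ℂ,
      (∀ a b x : M, d (a * b) x = d a (φ b * x) + d b (x * φ a)) →
      ∃ ξ : M →L[ℂ] ℂ, ∀ a x : M, d a x = ξ (φ a * x) - ξ (x * φ a)) :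
    -- then: no non-zero continuous point derivation at characters of the form `ψ ∘ φ`,
    -- `G` is discrete, and `M(G)` is weakly amenable
    (∀ ψ : M →L[ℂ] ℂ, ψ ≠ 0 → (∀ a b : M, ψ (a * b) = ψ a * ψ b) →
      ∀ D : M →L[ℂ] ℂ,
        (∀ a b : M, D (a * b) = D a * ψ (φ b) + ψ (φ a) * D b) → D = 0) ∧
    DiscreteTopology G ∧ WeaklyAmenable M :=
  stmt4_general hDGH₁ hDGH₂ φ hφ hφonto hWA
end
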